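/- arXiv:2203.09199 — 4 statements merged into one kernel-verified Lean document; each statement's English description precedes it below -/
import Mathlib

section
/- Let A be a complete lattice and let m ∈ A be completely meet-prime. Then λ(m) := sInf {a ∈ A | ¬(a ≤ m)} is completely join-prime. -/
def CompletelyJoinPrime {A : Type*} [CompleteLattice A] (j : A) : Prop :=
  ∀ S : Set A, j ≤ sSup S → ∃ s ∈ S, j ≤ s

def CompletelyMeetPrime {A : Type*} [CompleteLattice A] (m : A) : Prop :=
  ∀ S : Set A, sInf S ≤ m → ∃ s ∈ S, s ≤ m

theorem stmt_3 {A : Type*} [CompleteLattice A] (m : A)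
    (hm : CompletelyMeetPrime m) :
    CompletelyJoinPrime (sInf {a : A | ¬ a ≤ m}) := by
  intro S hS
  have hlm : ¬ sInf {a : A | ¬ a ≤ m} ≤ m := by
    intro h
    obtain ⟨s, hs, hsm⟩ := hm _ h
    exact hs hsm
  by_contra h
  push_neg at h
  have : ∀ s ∈ S, s ≤ m := by
    intro s hs
    by_contra hsm
    exact h s hs (sInf_le hsm)
  exact hlm (hS.trans (sSup_le this))
end

section
/- (Right-handed universal Ackermann lemma.) Let A be a partially ordered set, α ∈ A, and β, γ, δ, ε : A → A with β and ε monotone and γ and δ antitone. Then the following are equivalent: (a) for every p ∈ A, if α ≤ p and β(p) ≤ γ(p) then δ(p) ≤ ε(p); (b) if β(α) ≤ γ(α) then δ(α) ≤ ε(α). -/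
theorem stmt_6 {A : Type*} [PartialOrder A] (α : A) (β γ δ ε : A → A)
    (hβ : Monotone β) (hε : Monotone ε) (hγ : Antitone γ) (hδ : Antitone δ) :
    (∀ p : A, α ≤ p → β p ≤ γ p → δ p ≤ ε p) ↔ (β α ≤ γ α → δ α ≤ ε α) := by
  constructor
  · exact fun h => h α le_rfl
  · intro h p hap hbg
    exact (hδ hap).trans ((h ((hβ hap).trans (hbg.trans (hγ hap)))).trans (hε hap))
end

section
/- (Right-handed existential Ackermann lemma.) Let A be a partially ordered set, α ∈ A, and β, γ, δ, ε : A → A with β and ε antitone and γ and δ monotone. Then the following are equivalent: (a) if β(α) ≤ γ(α) then δ(α) ≤ ε(α); (b) there exists p ∈ A such that α ≤ p and (β(p) ≤ γ(p) implies δ(p) ≤ ε(p)). -/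
theorem stmt_7 {A : Type*} [PartialOrder A] (α : A) (β γ δ ε : A → A)
    (hβ : Antitone β) (hε : Antitone ε) (hγ : Monotone γ) (hδ : Monotone δ) :
    (β α ≤ γ α → δ α ≤ ε α) ↔ ∃ p : A, α ≤ p ∧ (β p ≤ γ p → δ p ≤ ε p) := by
  constructor
  · intro h
    exact ⟨α, le_refl α, h⟩
  · rintro ⟨p, hp, h⟩ hba
    have : β p ≤ γ p := le_trans (hβ hp) (le_trans hba (hγ hp))
    exact le_trans (hδ hp) (le_trans (h this) (hε hp))
end

section
/- (Left-handed existential Ackermann lemma.) Let A be a partially ordered set, α ∈ A, and β, γ, δ, ε : A → A with β and ε monotone and γ and δ antitone. Then the following are equivalent: (a) if β(α) ≤ γ(α) then δ(α) ≤ ε(α); (b) there exists p ∈ A such that p ≤ α and (β(p) ≤ γ(p) implies δ(p) ≤ ε(p)). -/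
theorem stmt_9 {A : Type*} [PartialOrder A] (α : A) (β γ δ ε : A → A)
    (hβ : Monotone β) (hε : Monotone ε) (hγ : Antitone γ) (hδ : Antitone δ) :
    (β α ≤ γ α → δ α ≤ ε α) ↔ ∃ p : A, p ≤ α ∧ (β p ≤ γ p → δ p ≤ ε p) := by
  constructor
  · intro h
    exact ⟨α, le_refl α, h⟩
  · rintro ⟨p, hp, h⟩ hβγ
    have : β p ≤ γ p := le_trans (hβ hp) (le_trans hβγ (hγ hp))
    exact le_trans (hδ hp) (le_trans (h this) (hε hp))
end
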